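/- Let N, n_x, n_u be natural numbers. For each stage j < N let A_j ∈ ℝ^{n_x×n_x}, B_j ∈ ℝ^{n_x×n_u}, and let H_j ∈ ℝ^{(n_x+n_u)×(n_x+n_u)} for j < N and H_N ∈ ℝ^{n_x×n_x} be invertible matrices. Let M be the block lower bidiagonal matrix whose 0-th block row is (E_0, 0, …, 0) and whose (j+1)-th block row has (−A_j −B_j) in the stage-j columns and E_{j+1} in the stage-(j+1) columns, where E_j = (I_{n_x} 0_{n_x×n_u}) for j < N and E_N = I_{n_x}; let H be the block-diagonal matrix with blocks H_j. Then the blocks of Ψ = M H⁻¹ Mᵀ satisfy: Ψ_{0,0} = E_0 H_0⁻¹ E_0ᵀ; Ψ_{j+1,j+1} = (A_j B_j) H_j⁻¹ (A_j B_j)ᵀ + E_{j+1} H_{j+1}⁻¹ E_{j+1}ᵀ for j < N; Ψ_{j+1,j} = −(A_j B_j) H_j⁻¹ E_jᵀ for j < N; and Ψ_{i,j} = 0 whenever |i − j| ≥ 2. -/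

import Mathlib

/-!
Inverting `H` blockwise, the `(i, j)` block of `Ψ = M H⁻¹ Mᵀ` is
`∑ₖ M_{ik} H_k⁻¹ M_{jk}ᵀ`, plus the terminal contribution `E_N H_N⁻¹ E_Nᵀ` when
`i = j = N`.
The stage-`k` column block of `M` is nonzero only in block rows `k` (where it is `E`) and
`k + 1` (where it is `-(A_k B_k)`), so only the stages with `{i, j} ⊆ {k, k + 1}` contribute.
-/

open Matrix

theorem Fin.sum_ite_castSucc_add_ite_last {M : Type*} [AddCommMonoid M] {N : ℕ}
    (X : Fin N → M) (Y : M) (i : Fin (N + 1)) :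
    (∑ k, if i = k.castSucc then X k else 0) + (if i = Fin.last N then Y else 0) =
      if h : (i : ℕ) < N then X ⟨i, h⟩ else Y := by
  induction i using Fin.lastCases with
  | last => simp [eq_comm (a := Fin.last N), Fin.castSucc_ne_last]
  | cast k => simp [Fin.castSucc_ne_last, Fin.castSucc_inj]

namespace Matrix

variable {R ι m n o κ : Type*}

def stageBlock (P : Matrix (ι × m) ((n × κ) ⊕ o) R) (i : ι) (k : κ) : Matrix m n R :=
  of fun r s => P (i, r) (Sum.inl (s, k))

def terminalBlock (P : Matrix (ι × m) ((n × κ) ⊕ o) R) (i : ι) : Matrix m o R :=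
  of fun r s => P (i, r) (Sum.inr s)

theorem inv_fromBlocks_blockDiagonal [Fintype n] [DecidableEq n] [Fintype κ] [DecidableEq κ]
    [Fintype o] [DecidableEq o] [CommRing R] {G : κ → Matrix n n R} {G' : Matrix o o R}
    (hG : ∀ k, IsUnit (G k)) (hG' : IsUnit G') :
    (fromBlocks (blockDiagonal G) 0 0 G')⁻¹ =
      fromBlocks (blockDiagonal fun k => (G k)⁻¹) 0 0 G'⁻¹ := by
  refine inv_eq_right_inv ?_
  have hGinv (k : κ) : G k * (G k)⁻¹ = 1 :=
    mul_nonsing_inv _ ((isUnit_iff_isUnit_det _).mp (hG k))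
  simp [fromBlocks_multiply, ← blockDiagonal_mul, hGinv, ← Pi.one_def, fromBlocks_one,
    mul_nonsing_inv _ ((isUnit_iff_isUnit_det _).mp hG')]

theorem mul_fromBlocks_blockDiagonal_mul_transpose_apply [Fintype n] [Fintype κ]
    [DecidableEq κ] [Fintype o] [Semiring R] (P Q : Matrix (ι × m) ((n × κ) ⊕ o) R)
    (G : κ → Matrix n n R) (G' : Matrix o o R) (i j : ι) (r c : m) :
    (P * fromBlocks (blockDiagonal G) 0 0 G' * Qᵀ) (i, r) (j, c) =
      (∑ k, stageBlock P i k * G k * (stageBlock Q j k)ᵀ) r c +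
        (terminalBlock P i * G' * (terminalBlock Q j)ᵀ) r c := by
  simp only [mul_apply, Fintype.sum_sum_type, Fintype.sum_prod_type, fromBlocks_apply₁₁,
    fromBlocks_apply₁₂, fromBlocks_apply₂₁, fromBlocks_apply₂₂, blockDiagonal_apply, zero_apply,
    mul_zero, Finset.sum_const_zero, add_zero, zero_add, transpose_apply, stageBlock,
    terminalBlock, of_apply, Matrix.sum_apply, mul_ite, Finset.sum_ite_eq', Finset.mem_univ,
    if_true]
  rw [Finset.sum_comm]

section Bidiagonal

variable {R m n : Type*} [Ring R] {N : ℕ}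

def bidiagBlock (E : Matrix m n R) (C : Fin N → Matrix m n R) (i : Fin (N + 1)) (k : Fin N) :
    Matrix m n R :=
  (if i = k.castSucc then E else 0) - if i = k.succ then C k else 0

variable (E : Matrix m n R) (C : Fin N → Matrix m n R)

theorem bidiagBlock_castSucc (k : Fin N) : bidiagBlock E C k.castSucc k = E := by
  simp [bidiagBlock, Fin.castSucc_lt_succ.ne]

theorem bidiagBlock_succ (k : Fin N) : bidiagBlock E C k.succ k = -C k := by
  simp [bidiagBlock, Fin.castSucc_lt_succ.ne']

theorem bidiagBlock_of_ne {i : Fin (N + 1)} {k : Fin N} (h₁ : (i : ℕ) ≠ k)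
    (h₂ : (i : ℕ) ≠ k + 1) : bidiagBlock E C i k = 0 := by
  simp [bidiagBlock, Fin.ext_iff, h₁, h₂]

variable [Fintype n] (G : Fin N → Matrix n n R)

theorem bidiagBlock_mul_mul_transpose_self (i : Fin (N + 1)) (k : Fin N) :
    bidiagBlock E C i k * G k * (bidiagBlock E C i k)ᵀ =
      (if i = k.castSucc then E * G k * Eᵀ else 0) +
        if i = k.succ then C k * G k * (C k)ᵀ else 0 := by
  by_cases h₁ : i = k.castSucc
  · simp [h₁, bidiagBlock_castSucc, Fin.castSucc_lt_succ.ne]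
  by_cases h₂ : i = k.succ
  · simp [h₂, bidiagBlock_succ, Fin.castSucc_lt_succ.ne']
  simp [bidiagBlock, h₁, h₂]

theorem sum_bidiagBlock_mul_mul_transpose_self (i : Fin (N + 1)) :
    ∑ k, bidiagBlock E C i k * G k * (bidiagBlock E C i k)ᵀ =
      (∑ k, if i = k.castSucc then E * G k * Eᵀ else 0) +
        ∑ k, if i = k.succ then C k * G k * (C k)ᵀ else 0 := by
  simp only [bidiagBlock_mul_mul_transpose_self, Finset.sum_add_distrib]

theorem sum_bidiagBlock_succ_castSucc (j : Fin N) :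
    ∑ k, bidiagBlock E C j.succ k * G k * (bidiagBlock E C j.castSucc k)ᵀ =
      -(C j * G j * Eᵀ) := by
  rw [Finset.sum_eq_single j]
  · simp [bidiagBlock_succ, bidiagBlock_castSucc]
  · intro k _ hk
    have hk : (j : ℕ) ≠ k := (Fin.val_ne_of_ne hk).symm
    by_cases h : (j : ℕ) + 1 = k
    · simp [bidiagBlock_of_ne E C (i := j.castSucc) (k := k) (by simp; omega) (by simp; omega)]
    · simp [bidiagBlock_of_ne E C (i := j.succ) (k := k) (by simp; omega) (by simp; omega)]
  · simp

theorem sum_bidiagBlock_eq_zero {i j : Fin (N + 1)} (hij : 2 ≤ |(i : ℤ) - (j : ℤ)|) :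
    ∑ k, bidiagBlock E C i k * G k * (bidiagBlock E C j k)ᵀ = 0 := by
  refine Finset.sum_eq_zero fun k _ => ?_
  rw [le_abs] at hij
  by_cases hi : (i : ℕ) = k ∨ (i : ℕ) = k + 1
  · simp [bidiagBlock_of_ne E C (i := j) (k := k) (by omega) (by omega)]
  · simp [bidiagBlock_of_ne E C (i := i) (k := k) (by omega) (by omega)]

end Bidiagonal

end Matrix

/-- Explicit blocks of the Schur complement `Ψ = M H⁻¹ Mᵀ` for the OCP constraint
matrix `M` (block row 0 is `(E₀, 0, …, 0)`; block row `j+1` has `(−A_j −B_j)` in the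
stage-`j` columns and `E_{j+1}` in the stage-`(j+1)` columns, where `E_j = (I 0)` for
`j < N` and `E_N = I`) and the block-diagonal generalized Hessian `H` with invertible
blocks `H_j` (`j < N`) and `H_N`:
`Ψ₀₀ = E₀ H₀⁻¹ E₀ᵀ`, `Ψ_{j+1,j+1} = (A_j B_j) H_j⁻¹ (A_j B_j)ᵀ + E_{j+1} H_{j+1}⁻¹ E_{j+1}ᵀ`,
`Ψ_{j+1,j} = −(A_j B_j) H_j⁻¹ E_jᵀ`, and `Ψ_{i,j} = 0` for `|i − j| ≥ 2`. -/
theorem stmt_11 (N nx nu : ℕ)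
    (A : Fin N → Matrix (Fin nx) (Fin nx) ℝ)
    (B : Fin N → Matrix (Fin nx) (Fin nu) ℝ)
    (Hj : Fin N → Matrix (Fin nx ⊕ Fin nu) (Fin nx ⊕ Fin nu) ℝ)
    (HN : Matrix (Fin nx) (Fin nx) ℝ)
    (hHj : ∀ j, IsUnit (Hj j)) (hHN : IsUnit HN)
    -- the stage blocks E_j = (I 0) for j < N (as a matrix) …
    (E : Matrix (Fin nx) (Fin nx ⊕ Fin nu) ℝ)
    (hE : E = Matrix.fromCols 1 0)
    -- the constraint matrix M: the x^j column block carries E at block row j and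
    -- −A_j at block row j+1; the u^j column block carries −B_j at block row j+1;
    -- the terminal x^N column block carries E_N = I at block row N.
    (M : Matrix (Fin (N + 1) × Fin nx) (((Fin nx ⊕ Fin nu) × Fin N) ⊕ Fin nx) ℝ)
    (hM : M = Matrix.of fun p c =>
      match c with
      | Sum.inl (Sum.inl s, j) =>
          (if p.1 = j.castSucc ∧ p.2 = s then (1 : ℝ) else 0)
            + (if p.1 = j.succ then -(A j p.2 s) else 0)
      | Sum.inl (Sum.inr s, j) => if p.1 = j.succ then -(B j p.2 s) else 0
      | Sum.inr s => if p.1 = Fin.last N ∧ p.2 = s then (1 : ℝ) else 0)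
    -- the block-diagonal generalized Hessian
    (H : Matrix (((Fin nx ⊕ Fin nu) × Fin N) ⊕ Fin nx)
      (((Fin nx ⊕ Fin nu) × Fin N) ⊕ Fin nx) ℝ)
    (hH : H = Matrix.fromBlocks (Matrix.blockDiagonal Hj) 0 0 HN)
    -- the Schur complement
    (Ψ : Matrix (Fin (N + 1) × Fin nx) (Fin (N + 1) × Fin nx) ℝ)
    (hΨ : Ψ = M * H⁻¹ * Mᵀ)
    -- K i = E_i H_i⁻¹ E_iᵀ, with E_i = (I 0) for i < N and E_N = I
    (K : Fin (N + 1) → Matrix (Fin nx) (Fin nx) ℝ)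
    (hK : ∀ i : Fin (N + 1),
      K i = if h : (i : ℕ) < N then E * (Hj ⟨i, h⟩)⁻¹ * Eᵀ else HN⁻¹) :
    (∀ r c, Ψ (0, r) (0, c) = K 0 r c) ∧
    (∀ (j : Fin N) (r c : Fin nx),
      Ψ (j.succ, r) (j.succ, c)
        = (Matrix.fromCols (A j) (B j) * (Hj j)⁻¹
            * (Matrix.fromCols (A j) (B j))ᵀ + K j.succ) r c) ∧
    (∀ (j : Fin N) (r c : Fin nx),
      Ψ (j.succ, r) (j.castSucc, c)
        = (-(Matrix.fromCols (A j) (B j) * (Hj j)⁻¹ * Eᵀ)) r c) ∧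
    (∀ i j : Fin (N + 1), 2 ≤ |(i : ℤ) - (j : ℤ)| →
      ∀ r c, Ψ (i, r) (j, c) = 0) := by
  have hstage (i : Fin (N + 1)) (k : Fin N) :
      stageBlock M i k = bidiagBlock E (fun k => fromCols (A k) (B k)) i k := by
    subst hM hE
    ext r (s | s) <;> simp only [stageBlock, bidiagBlock, of_apply] <;> split_ifs <;>
      simp_all [one_apply, sub_eq_add_neg]
  have hterminal (i : Fin (N + 1)) :
      terminalBlock M i = if i = Fin.last N then 1 else 0 := by
    subst hM
    ext r s
    simp only [terminalBlock, of_apply]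
    split_ifs <;> simp_all [one_apply]
  have hentry (i j : Fin (N + 1)) (r c : Fin nx) : Ψ (i, r) (j, c) =
      (∑ k, bidiagBlock E (fun k => fromCols (A k) (B k)) i k * (Hj k)⁻¹ *
          (bidiagBlock E (fun k => fromCols (A k) (B k)) j k)ᵀ +
        if i = Fin.last N ∧ j = Fin.last N then HN⁻¹ else 0 :
        Matrix (Fin nx) (Fin nx) ℝ) r c := by
    rw [hΨ, hH, inv_fromBlocks_blockDiagonal hHj hHN,
      mul_fromBlocks_blockDiagonal_mul_transpose_apply, Matrix.add_apply, hterminal, hterminal]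
    simp only [hstage]
    congr 1
    split_ifs <;> simp_all
  have hdiag (i : Fin (N + 1)) (r c : Fin nx) : Ψ (i, r) (i, c) =
      ((∑ k, if i = k.succ then fromCols (A k) (B k) * (Hj k)⁻¹ * (fromCols (A k) (B k))ᵀ
          else 0) + K i) r c := by
    simp only [hentry, sum_bidiagBlock_mul_mul_transpose_self, and_self]
    rw [add_right_comm, Fin.sum_ite_castSucc_add_ite_last, hK, add_comm]
  refine ⟨fun r c => ?_, fun j r c => ?_, fun j r c => ?_, fun i j hij r c => ?_⟩
  · simp [hdiag, eq_comm (a := (0 : Fin (N + 1)))]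
  · simp [hdiag, Fin.succ_inj]
  · simp [hentry, sum_bidiagBlock_succ_castSucc, Fin.castSucc_ne_last]
  · have hnot_last : ¬(i = Fin.last N ∧ j = Fin.last N) := by
      rintro ⟨rfl, rfl⟩
      simp at hij
    simp [hentry, sum_bidiagBlock_eq_zero _ _ _ hij, hnot_last]
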